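/- arXiv:2206.04477 — 2 statements merged into one kernel-verified Lean document; each statement's English description precedes it below -/
import Mathlib

section
/- Let P and Q be probability measures on a measurable space. Then the total variation distance satisfies D_TV(P, Q) ≤ √(D_KL(P ∥ Q) / 2). -/
open MeasureTheory ProbabilityTheory ENNReal Classical

variable {α : Type*} [MeasurableSpace α]

/-- Kullback–Leibler divergence of `P` with respect to `Q`, valued in `ℝ≥0∞`;
it is `⊤` if `P` is not absolutely continuous with respect to `Q` (or the
log-likelihood ratio is not integrable). -/
noncomputable def klDiv (P Q : Measure α) : ℝ≥0∞ :=
  if P ≪ Q ∧ Integrable (llr P Q) P then ENNReal.ofReal (∫ x, llr P Q x ∂P) else ⊤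

/-- Total variation distance between two measures:
`sup` over measurable sets `A` of `|P(A) − Q(A)|`. -/
noncomputable def tvDist (P Q : Measure α) : ℝ :=
  ⨆ A : {s : Set α // MeasurableSet s}, |(P A).toReal - (Q A).toReal|

/-!
Write `g = dP/dQ` and `φ x = x log x + 1 - x`. Then `D_TV(P, Q) ≤ ½ ∫ |g - 1| dQ`, because
`g - 1` has `Q`-integral zero, and `D_KL(P ∥ Q) = ∫ φ(g) dQ`. The elementary bound
`3 (x - 1)² ≤ (2x + 4) φ(x)` and the Cauchy–Schwarz inequality give
`(∫ |g - 1| dQ)² ≤ (∫ (2g + 4)/3 dQ) (∫ φ(g) dQ) = 2 D_KL(P ∥ Q)`.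
-/

open Set
open InformationTheory (klFun klFun_one klFun_nonneg hasDerivAt_klFun integral_klFun_rnDeriv
  integrable_klFun_rnDeriv_iff)

lemma monotoneOn_add_one_mul_log_sub_two_mul_sub_one :
    MonotoneOn (fun x => (x + 1) * Real.log x - 2 * (x - 1)) (Ioi 0) := by
  refine monotoneOn_of_hasDerivWithinAt_nonneg (convex_Ioi 0)
    (f' := fun x => Real.log x + x⁻¹ - 1) ?_ (fun x hx => ?_) (fun x hx => ?_)
  · exact ((continuousOn_id.add continuousOn_const).mul
      (Real.continuousOn_log.mono fun y hy => ne_of_gt hy)).sub (by fun_prop)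
  · rw [interior_Ioi] at hx
    have hx0 : x ≠ 0 := hx.ne'
    refine HasDerivAt.hasDerivWithinAt <| HasDerivAt.congr_deriv
      ((((hasDerivAt_id x).add_const 1).mul (Real.hasDerivAt_log hx0)).sub
        (((hasDerivAt_id x).sub_const 1).const_mul 2)) ?_
    simp only [id]
    field_simp
    ring
  · rw [interior_Ioi] at hx
    linarith [Real.one_sub_inv_le_log_of_pos hx]

lemma three_mul_sq_sub_one_le_mul_klFun {x : ℝ} (hx : 0 ≤ x) :
    3 * (x - 1) ^ 2 ≤ (2 * x + 4) * klFun x := by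
  set F : ℝ → ℝ := fun y => (2 * y + 4) * klFun y - 3 * (y - 1) ^ 2
  set G : ℝ → ℝ := fun y => (y + 1) * Real.log y - 2 * (y - 1)
  have hG1 : G 1 = 0 := by simp [G]
  have hF1 : F 1 = 0 := by simp [F, klFun_one]
  have hFcont : ContinuousOn F (Ici 0) := by fun_prop
  have hF' : ∀ y, 0 < y → HasDerivAt F (4 * G y) y := fun y hy => by
    refine ((((hasDerivAt_id y).const_mul 2).add_const 4).mul (hasDerivAt_klFun hy.ne')
      |>.sub ((((hasDerivAt_id y).sub_const 1).pow 2).const_mul 3)).congr_deriv ?_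
    simp only [G, klFun, id]
    ring
  -- `G` is monotone with `G 1 = 0`, so `F' = 4 G` has the sign of `y - 1`: `F` is least at `1`.
  have hG : MonotoneOn G (Ioi 0) := monotoneOn_add_one_mul_log_sub_two_mul_sub_one
  suffices 0 ≤ F x by simpa [F] using this
  rcases le_total x 1 with hx1 | hx1
  · have hanti : AntitoneOn F (Icc 0 1) := by
      refine antitoneOn_of_hasDerivWithinAt_nonpos (convex_Icc 0 1) (f' := fun y => 4 * G y)
        (hFcont.mono Icc_subset_Ici_self) (fun y hy => ?_) (fun y hy => ?_) <;>
        rw [interior_Icc] at hy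
      · exact (hF' y hy.1).hasDerivWithinAt
      · linarith [hG hy.1 (mem_Ioi.2 one_pos) hy.2.le]
    simpa [hF1] using hanti ⟨hx, hx1⟩ ⟨zero_le_one, le_rfl⟩ hx1
  · have hmono : MonotoneOn F (Ici 1) := by
      refine monotoneOn_of_hasDerivWithinAt_nonneg (convex_Ici 1) (f' := fun y => 4 * G y)
        (hFcont.mono (Ici_subset_Ici.2 zero_le_one)) (fun y hy => ?_) (fun y hy => ?_) <;>
        rw [interior_Ici] at hy
      · exact (hF' y (zero_lt_one.trans hy)).hasDerivWithinAt
      · linarith [hG (mem_Ioi.2 one_pos) (mem_Ioi.2 (zero_lt_one.trans hy)) hy.le]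
    simpa [hF1] using hmono self_mem_Ici hx1 hx1

lemma sq_integral_le_integral_mul_integral_of_sq_le_mul {μ : Measure α} {f a b : α → ℝ}
    (hf : Integrable f μ) (ha : Integrable a μ) (hb : Integrable b μ)
    (ha₀ : ∀ x, 0 ≤ a x) (hb₀ : ∀ x, 0 ≤ b x) (hfab : ∀ x, f x ^ 2 ≤ a x * b x) :
    (∫ x, f x ∂μ) ^ 2 ≤ (∫ x, a x ∂μ) * ∫ x, b x ∂μ := by
  have hquad : ∀ t : ℝ,
      0 ≤ (∫ x, b x ∂μ) * (t * t) + (-2 * ∫ x, f x ∂μ) * t + ∫ x, a x ∂μ := by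
    intro t
    -- where `a x > 0`: `a x * (b x * t ^ 2 - 2 * f x * t + a x) ≥ (t * f x - a x) ^ 2`
    have hpt : ∀ x, 0 ≤ b x * (t * t) + (-2 * f x) * t + a x := fun x => by
      rcases (ha₀ x).eq_or_lt with ha0 | hapos
      · have : f x = 0 := pow_eq_zero_iff two_ne_zero |>.1 <|
          le_antisymm (by simpa [← ha0] using hfab x) (sq_nonneg _)
        rw [this, ← ha0]
        nlinarith [hb₀ x]
      · refine nonneg_of_mul_nonneg_right ?_ hapos
        nlinarith [hfab x, sq_nonneg (t * f x - a x)]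
    calc 0 ≤ ∫ x, b x * (t * t) + (-2 * f x) * t + a x ∂μ := integral_nonneg hpt
      _ = _ := by
        rw [integral_add (by fun_prop) ha, integral_add (by fun_prop) (by fun_prop),
          integral_mul_const, integral_mul_const, integral_const_mul]
  have := discrim_le_zero hquad
  rw [discrim] at this
  linarith

lemma abs_setIntegral_le_half_integral_abs {μ : Measure α} {f : α → ℝ} {s : Set α}
    (hs : MeasurableSet s) (hf : Integrable f μ) (hf₀ : ∫ x, f x ∂μ = 0) :
    |∫ x in s, f x ∂μ| ≤ (∫ x, |f x| ∂μ) / 2 := by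
  have hcompl : ∫ x in sᶜ, f x ∂μ = -∫ x in s, f x ∂μ := by
    linarith [integral_add_compl hs hf]
  have hs_le : |∫ x in s, f x ∂μ| ≤ ∫ x in s, |f x| ∂μ := abs_integral_le_integral_abs
  have hsc_le : |∫ x in sᶜ, f x ∂μ| ≤ ∫ x in sᶜ, |f x| ∂μ :=
    abs_integral_le_integral_abs
  rw [hcompl, abs_neg] at hsc_le
  linarith [integral_add_compl hs hf.abs]

lemma tvDist_nonneg (P Q : Measure α) : 0 ≤ tvDist P Q :=
  Real.iSup_nonneg fun _ => abs_nonneg _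

lemma tvDist_le_half_integral_abs_rnDeriv_sub_one {P Q : Measure α}
    [IsProbabilityMeasure P] [IsProbabilityMeasure Q] (hPQ : P ≪ Q) :
    tvDist P Q ≤ (∫ x, |(P.rnDeriv Q x).toReal - 1| ∂Q) / 2 := by
  have hint : Integrable (fun x => (P.rnDeriv Q x).toReal - 1) Q :=
    Measure.integrable_toReal_rnDeriv.sub (integrable_const 1)
  have hzero : ∫ x, (P.rnDeriv Q x).toReal - 1 ∂Q = 0 := by
    rw [integral_sub Measure.integrable_toReal_rnDeriv (integrable_const 1),
      Measure.integral_toReal_rnDeriv hPQ]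
    simp
  refine ciSup_le fun ⟨s, hs⟩ => ?_
  have hdiff : (P s).toReal - (Q s).toReal = ∫ x in s, (P.rnDeriv Q x).toReal - 1 ∂Q := by
    rw [integral_sub Measure.integrable_toReal_rnDeriv.integrableOn
      (integrable_const 1).integrableOn, Measure.setIntegral_toReal_rnDeriv hPQ]
    simp [Measure.real]
  rw [hdiff]
  exact abs_setIntegral_le_half_integral_abs hs hint hzero

lemma sq_integral_abs_rnDeriv_sub_one_le_two_mul_integral_klFun {P Q : Measure α}
    [IsProbabilityMeasure P] [IsProbabilityMeasure Q] (hPQ : P ≪ Q)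
    (hklFun : Integrable (fun x => klFun (P.rnDeriv Q x).toReal) Q) :
    (∫ x, |(P.rnDeriv Q x).toReal - 1| ∂Q) ^ 2 ≤
      2 * ∫ x, klFun (P.rnDeriv Q x).toReal ∂Q := by
  have hg : Integrable (fun x => (P.rnDeriv Q x).toReal) Q := Measure.integrable_toReal_rnDeriv
  have hweight : ∫ x, (2 * (P.rnDeriv Q x).toReal + 4) / 3 ∂Q = 2 := by
    rw [integral_div, integral_add (hg.const_mul 2) (integrable_const 4), integral_const_mul,
      Measure.integral_toReal_rnDeriv hPQ]
    norm_num
  rw [← hweight]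
  refine sq_integral_le_integral_mul_integral_of_sq_le_mul (hg.sub (integrable_const 1)).abs
    (((hg.const_mul 2).add (integrable_const 4)).div_const 3) hklFun
    (fun x => by positivity) (fun x => klFun_nonneg ENNReal.toReal_nonneg) (fun x => ?_)
  rw [sq_abs]
  linarith [three_mul_sq_sub_one_le_mul_klFun (x := (P.rnDeriv Q x).toReal) ENNReal.toReal_nonneg]

/-- Pinsker's inequality: `D_TV(P, Q) ≤ √(D_KL(P ∥ Q) / 2)`, stated in the
equivalent squared form `2 · D_TV(P,Q)² ≤ D_KL(P ∥ Q)` (which also covers the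
trivial case `D_KL = ⊤`). -/
theorem pinsker_inequality (P Q : Measure α)
    [IsProbabilityMeasure P] [IsProbabilityMeasure Q] :
    ENNReal.ofReal (2 * (tvDist P Q) ^ 2) ≤ klDiv P Q := by
  by_cases h : P ≪ Q ∧ Integrable (llr P Q) P
  swap
  · rw [klDiv, if_neg h]
    exact le_top
  obtain ⟨hPQ, hllr⟩ := h
  have hKL : ∫ x, llr P Q x ∂P = ∫ x, klFun (P.rnDeriv Q x).toReal ∂Q := by
    simp [integral_klFun_rnDeriv hPQ hllr]
  rw [klDiv, if_pos ⟨hPQ, hllr⟩, hKL]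
  refine ENNReal.ofReal_le_ofReal ?_
  calc 2 * tvDist P Q ^ 2 ≤ 2 * ((∫ x, |(P.rnDeriv Q x).toReal - 1| ∂Q) / 2) ^ 2 := by
        gcongr
        exacts [tvDist_nonneg P Q, tvDist_le_half_integral_abs_rnDeriv_sub_one hPQ]
    _ = (∫ x, |(P.rnDeriv Q x).toReal - 1| ∂Q) ^ 2 / 2 := by ring
    _ ≤ ∫ x, klFun (P.rnDeriv Q x).toReal ∂Q := by
        linarith [sq_integral_abs_rnDeriv_sub_one_le_two_mul_integral_klFun hPQ
          ((integrable_klFun_rnDeriv_iff hPQ).2 hllr)]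
end

section
/- Let P and Q be joint probability distributions of a pair of random variables (a, b) on finite sets A and B such that P(b|a) = Q(b|a) for all a with Q(a) > 0. Then for any convex function f, Σ_a Q(a)·f(P(a)/Q(a)) ≥ Σ_b Q(b)·f(P(b)/Q(b)), where P(a), Q(a), P(b), Q(b) denote the marginal distributions. -/
open Finset

/-! Since `P(b|a) = Q(b|a)`, the joint density ratio `P(a,b) / Q(a,b)` equals the marginal ratio
`r a = P(a) / Q(a)`, so `P(b) / Q(b)` is the average of `r` under `Q(a|b)`. Jensen's inequality for
this average, weighted by `Q(b)` and summed over `b`, gives `∑_a Q(a) f (r a)`. -/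

/-- For zero total weight both sides vanish, whatever the junk value `f (0 / 0)`. -/
theorem ConvexOn.sum_mul_map_div_le {ι : Type*} {D : Set ℝ} {f : ℝ → ℝ} (hf : ConvexOn ℝ D f)
    (s : Finset ι) {w x : ι → ℝ} (hw : ∀ i ∈ s, 0 ≤ w i) (hx : ∀ i ∈ s, x i ∈ D) :
    (∑ i ∈ s, w i) * f ((∑ i ∈ s, w i * x i) / ∑ i ∈ s, w i) ≤ ∑ i ∈ s, w i * f (x i) := by
  rcases (sum_nonneg hw).eq_or_lt with hzero | hpos
  · have hw0 : ∀ i ∈ s, w i = 0 := (sum_eq_zero_iff_of_nonneg hw).1 hzero.symm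
    rw [← hzero, zero_mul, sum_eq_zero fun i hi => by rw [hw0 i hi, zero_mul]]
  · have hjensen := hf.map_centerMass_le hw hpos hx
    simp only [centerMass, smul_eq_mul, Function.comp_apply] at hjensen
    rw [inv_mul_eq_div] at hjensen
    calc (∑ i ∈ s, w i) * f ((∑ i ∈ s, w i * x i) / ∑ i ∈ s, w i)
        ≤ (∑ i ∈ s, w i) * ((∑ i ∈ s, w i)⁻¹ * ∑ i ∈ s, w i * f (x i)) := by gcongr
      _ = ∑ i ∈ s, w i * f (x i) := mul_inv_cancel_left₀ hpos.ne' _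

theorem information_loss_general {A B : Type*} [Fintype A] [Fintype B]
    (P Q : A → B → ℝ)
    (hQ : ∀ a b, 0 ≤ Q a b)
    (hQa : ∀ a, 0 < ∑ b, Q a b)
    (hcond : ∀ a, 0 < ∑ b, Q a b →
      ∀ b, P a b * (∑ b', Q a b') = (∑ b', P a b') * Q a b)
    (f : ℝ → ℝ) (hf : ConvexOn ℝ Set.univ f) :
    ∑ b, (∑ a, Q a b) * f ((∑ a, P a b) / (∑ a, Q a b)) ≤
      ∑ a, (∑ b, Q a b) * f ((∑ b, P a b) / (∑ b, Q a b)) := by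
  set r : A → ℝ := fun a => (∑ b, P a b) / ∑ b, Q a b
  have hP_eq : ∀ a b, P a b = Q a b * r a := fun a b => by
    rw [mul_div_assoc', eq_div_iff (hQa a).ne', hcond a (hQa a) b, mul_comm]
  calc ∑ b, (∑ a, Q a b) * f ((∑ a, P a b) / ∑ a, Q a b)
      ≤ ∑ b, ∑ a, Q a b * f (r a) := sum_le_sum fun b _ => by
        simpa only [hP_eq] using
          hf.sum_mul_map_div_le univ (fun a _ => hQ a b) fun a _ => Set.mem_univ (r a)
    _ = ∑ a, (∑ b, Q a b) * f (r a) := by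
        rw [sum_comm]
        simp only [sum_mul]

/-- Information-loss (data-processing) inequality for f-divergences: if the joint
distributions `P` and `Q` on `A × B` share the same conditional `P(b|a) = Q(b|a)`
(expressed cross-multiplied) and `Q` has positive marginals, then for any convex
`f`, the f-divergence of the `a`-marginals dominates that of the `b`-marginals. -/
theorem information_loss {A B : Type*} [Fintype A] [Fintype B]
    (P Q : A → B → ℝ)
    (hP : ∀ a b, 0 ≤ P a b) (hQ : ∀ a b, 0 ≤ Q a b)
    (hPsum : ∑ a, ∑ b, P a b = 1) (hQsum : ∑ a, ∑ b, Q a b = 1)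
    (hQa : ∀ a, 0 < ∑ b, Q a b) (hQb : ∀ b, 0 < ∑ a, Q a b)
    (hcond : ∀ a, 0 < ∑ b, Q a b →
      ∀ b, P a b * (∑ b', Q a b') = (∑ b', P a b') * Q a b)
    (f : ℝ → ℝ) (hf : ConvexOn ℝ Set.univ f) :
    ∑ b, (∑ a, Q a b) * f ((∑ a, P a b) / (∑ a, Q a b)) ≤
      ∑ a, (∑ b, Q a b) * f ((∑ b, P a b) / (∑ b, Q a b)) :=
  information_loss_general P Q hQ hQa hcond f hf
end
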